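/- arXiv:math/9811187 — 3 statements merged into one kernel-verified Lean document; each statement's English description precedes it below -/
import Mathlib

section
/- For all k, r, p > 0 there exists n such that for every function F: [n]^k → ℕ^r satisfying |F(x)| ≤ min(x) for all x ∈ [n]^k, there exists E ∈ S_p([n]) such that for all x, y ∈ E^k of the same order type, if min(x) = min(y) then F(x) = F(y). -/
open Classical in
theorem myRamsey (k : ℕ) {C : Type} [Finite C] :
    ∀ (f : (Fin k → ℕ) → C) (S : Set ℕ), S.Infinite →
    ∃ H : Set ℕ, H ⊆ S ∧ H.Infinite ∧ ∀ x y : Fin k → ℕ, StrictMono x → StrictMono y →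
      (∀ i, x i ∈ H) → (∀ i, y i ∈ H) → f x = f y := by
  induction k with
  | zero =>
    intro f S hS
    exact ⟨S, le_refl _, hS, fun x y _ _ _ _ => by rw [Subsingleton.elim x y]⟩
  | succ k ih =>
    intro f S hS
    have step : ∀ S : Set ℕ, S.Infinite → ∀ a : ℕ,
        ∃ T : Set ℕ, T ⊆ S ∧ (∀ b ∈ T, a < b) ∧ T.Infinite ∧
          ∀ x y : Fin k → ℕ, StrictMono x → StrictMono y →
            (∀ i, x i ∈ T) → (∀ i, y i ∈ T) →
            f (Fin.cons a x) = f (Fin.cons a y) := by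
      intro S hS a
      have h1 : (S ∩ Set.Ioi a).Infinite := by
        have h2 := hS.diff (Set.finite_Iic a)
        have : S \ Set.Iic a = S ∩ Set.Ioi a := by
          ext b; simp [not_le]
        rwa [this] at h2
      obtain ⟨T, hTsub, hTinf, hhom⟩ := ih (fun x => f (Fin.cons a x)) _ h1
      exact ⟨T, fun b hb => (hTsub hb).1, fun b hb => (hTsub hb).2, hTinf, hhom⟩
    let next : {S : Set ℕ // S.Infinite} → {S : Set ℕ // S.Infinite} := fun T =>
      ⟨choose (step T.1 T.2 T.2.nonempty.some), (choose_spec (step T.1 T.2 T.2.nonempty.some)).2.2.1⟩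
    let SS : ℕ → {S : Set ℕ // S.Infinite} := fun n =>
      Nat.rec ⟨S, hS⟩ (fun _ prev => next prev) n
    let a : ℕ → ℕ := fun n => (SS n).2.nonempty.some
    have ha : ∀ n, a n ∈ (SS n).1 := fun n => (SS n).2.nonempty.some_mem
    have hSSsucc : ∀ n, SS (n+1) = next (SS n) := fun n => rfl
    have hspec : ∀ n, (SS (n+1)).1 ⊆ (SS n).1 ∧ (∀ b ∈ (SS (n+1)).1, a n < b) ∧
        (SS (n+1)).1.Infinite ∧
        ∀ x y : Fin k → ℕ, StrictMono x → StrictMono y →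
          (∀ i, x i ∈ (SS (n+1)).1) → (∀ i, y i ∈ (SS (n+1)).1) →
          f (Fin.cons (a n) x) = f (Fin.cons (a n) y) := fun n =>
      choose_spec (step (SS n).1 (SS n).2 (SS n).2.nonempty.some)
    have hmono : ∀ n m, n ≤ m → (SS m).1 ⊆ (SS n).1 := by
      intro n m h
      induction h with
      | refl => exact le_refl _
      | step h ih2 => exact fun b hb => ih2 ((hspec _).1 hb)
    have hamem : ∀ n m, n < m → a m ∈ (SS (n+1)).1 := fun n m h =>
      hmono (n+1) m h (ha m)
    have halt : StrictMono a := strictMono_nat_of_lt_succ (fun n =>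
      (hspec n).2.1 _ (hamem n (n+1) (Nat.lt_succ_self n)))
    have haltlt : ∀ n m, n < m → a n < a m := fun n m h => halt h
    -- tail tuple
    let t : ℕ → (Fin k → ℕ) := fun n i => a (n + 1 + i)
    have htmem : ∀ n i, t n i ∈ (SS (n+1)).1 := fun n i =>
      hmono (n+1) (n+1+i) (by omega) (ha _)
    have htsm : ∀ n, StrictMono (t n) := fun n i j hij => halt (by
      simp only [Fin.lt_iff_val_lt_val] at hij; omega)
    let c : ℕ → C := fun n => f (Fin.cons (a n) (t n))
    obtain ⟨c0, hc0⟩ := Finite.exists_infinite_fiber c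
    have hfib : {n | c n = c0}.Infinite := by
      have : c ⁻¹' {c0} = {n | c n = c0} := by ext n; simp
      rw [← this]
      exact Set.infinite_coe_iff.mp hc0
    refine ⟨a '' {n | c n = c0}, ?_, ?_, ?_⟩
    · rintro b ⟨n, _, rfl⟩
      exact hmono 0 n (Nat.zero_le n) (ha n)
    · exact hfib.image (halt.injective.injOn)
    · have key : ∀ x : Fin (k+1) → ℕ, StrictMono x →
          (∀ i, x i ∈ a '' {n | c n = c0}) → f x = c0 := by
        intro x hx hmem
        have hxm : ∀ i, ∃ n, c n = c0 ∧ a n = x i := by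
          intro i
          obtain ⟨n, hn, hn2⟩ := hmem i
          exact ⟨n, hn, hn2⟩
        choose m hm1 hm2 using hxm
        have hm0 : ∀ i : Fin k, m 0 < m i.succ := by
          intro i
          have : x 0 < x i.succ := hx (by simp [Fin.lt_iff_val_lt_val])
          rw [← hm2 0, ← hm2 i.succ] at this
          exact halt.lt_iff_lt.mp this
        have htailmem : ∀ i : Fin k, Fin.tail x i ∈ (SS (m 0 + 1)).1 := by
          intro i
          have : Fin.tail x i = a (m i.succ) := (hm2 i.succ).symm
          rw [this]
          exact hamem (m 0) (m i.succ) (hm0 i)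
        have htailsm : StrictMono (Fin.tail x) := by
          intro i j hij
          exact hx (by simp [Fin.lt_iff_val_lt_val, Fin.lt_iff_val_lt_val.mp hij])
        have h1 : f x = f (Fin.cons (a (m 0)) (Fin.tail x)) := by
          rw [hm2 0, Fin.cons_self_tail]
        have h2 : f (Fin.cons (a (m 0)) (Fin.tail x)) = f (Fin.cons (a (m 0)) (t (m 0))) :=
          (hspec (m 0)).2.2.2 _ _ htailsm (htsm (m 0)) htailmem (htmem (m 0))
        rw [h1, h2]
        exact hm1 0
      intro x y hx hy hxm hym
      rw [key x hx hxm, key y hy hym]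


theorem consSM {d : ℕ} {a : ℕ} {w : Fin d → ℕ} (hw : StrictMono w) (h : ∀ i, a < w i) :
    StrictMono (Fin.cons a w : Fin (d+1) → ℕ) := by
  intro i j hij
  induction i using Fin.cases with
  | zero =>
    induction j using Fin.cases with
    | zero => exact absurd hij (lt_irrefl _)
    | succ j => simpa using h j
  | succ i =>
    induction j using Fin.cases with
    | zero => exact absurd hij (by simp [Fin.lt_iff_val_lt_val])
    | succ j =>
      simp only [Fin.cons_succ]
      exact hw (by rw [Fin.succ_lt_succ_iff] at hij; exact hij)

def firstT (d : ℕ) (z : Fin (2*d+1) → ℕ) : Fin (d+1) → ℕ := fun i => z ⟨i.1, by omega⟩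

def secondT (d : ℕ) (z : Fin (2*d+1) → ℕ) : Fin (d+1) → ℕ :=
  Fin.cons (z ⟨0, by omega⟩) (fun i => z ⟨d+1+i.1, by omega⟩)


open Classical in
theorem myMinHomog (d : ℕ) {ι : Type} [Finite ι]
    (F : (Fin (d+1) → ℕ) → ι → ℕ)
    (hreg : ∀ x : Fin (d+1) → ℕ, StrictMono x → ∀ j, F x j ≤ x 0) :
    ∃ H : Set ℕ, H.Infinite ∧ ∀ x y : Fin (d+1) → ℕ, StrictMono x → StrictMono y →
      (∀ i, x i ∈ H) → (∀ i, y i ∈ H) → x 0 = y 0 → F x = F y := by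
  obtain ⟨H, -, Hinf, hom⟩ := myRamsey (2*d+1)
    (fun z => decide (F (firstT d z) = F (secondT d z))) Set.univ Set.infinite_univ
  have Hinf' : (setOf (· ∈ H)).Infinite := Hinf
  let e : ℕ → ℕ := fun n => Nat.nth (· ∈ H) n
  have he_mem : ∀ n, e n ∈ H := fun n => Nat.nth_mem_of_infinite Hinf' n
  have he_sm : StrictMono e := fun n m h => (Nat.nth_lt_nth Hinf').mpr h
  have he_ge : ∀ n, n ≤ e n := fun n => he_sm.le_apply
  let z0 : Fin (2*d+1) → ℕ := fun i => e i.1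
  have hz0sm : StrictMono z0 := fun i j hij => he_sm (Fin.lt_iff_val_lt_val.mp hij)
  have hz0mem : ∀ i, z0 i ∈ H := fun i => he_mem i.1
  by_cases hcase : F (firstT d z0) = F (secondT d z0)
  · -- all equal
    have hP : ∀ z : Fin (2*d+1) → ℕ, StrictMono z → (∀ i, z i ∈ H) →
        F (firstT d z) = F (secondT d z) := by
      intro z hz hm
      have h1 := hom z z0 hz hz0sm hm hz0mem
      simp only [decide_eq_decide] at h1
      exact h1.mpr hcase
    refine ⟨H, Hinf, ?_⟩
    intro x y hx hy hxm hym h00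
    set N := x (Fin.last d) + y (Fin.last d) + 1 with hN
    have key : ∀ v : Fin (d+1) → ℕ, StrictMono v → (∀ i, v i ∈ H) →
        (∀ i, v i < N) → F v = F (Fin.cons (v 0) (fun i : Fin d => e (N + i.1))) := by
      intro v hv hvm hvN
      let z : Fin (2*d+1) → ℕ := fun i =>
        if h : i.1 ≤ d then v ⟨i.1, by omega⟩ else e (N + (i.1 - (d+1)))
      have hzsm : StrictMono z := by
        intro i j hij
        have hij' : i.1 < j.1 := hij
        show z i < z j
        simp only [z]
        by_cases hi : i.1 ≤ d <;> by_cases hj : j.1 ≤ d <;>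
          simp only [hi, hj, dif_pos, dif_neg, dite_true, dite_false]
        · exact hv (by exact hij')
        · calc v ⟨i.1, by omega⟩ < N := hvN _
            _ ≤ e N := he_ge N
            _ ≤ e (N + (j.1 - (d+1))) := he_sm.monotone (Nat.le_add_right _ _)
        · omega
        · exact he_sm (by omega)
      have hzmem : ∀ i, z i ∈ H := by
        intro i
        simp only [z]
        by_cases hi : i.1 ≤ d <;> simp only [hi, dite_true, dite_false]
        · exact hvm _
        · exact he_mem _
      have h1 := hP z hzsm hzmem
      have hfz : firstT d z = v := by
        funext i
        simp only [firstT, z]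
        have : i.1 ≤ d := by omega
        simp only [this, dite_true]
      have hsz : secondT d z = Fin.cons (v 0) (fun i : Fin d => e (N + i.1)) := by
        funext i
        induction i using Fin.cases with
        | zero =>
          simp only [secondT, Fin.cons_zero, z]
          have h0 : (0:ℕ) ≤ d := Nat.zero_le d
          simp only [h0, dite_true]
          rfl
        | succ i =>
          simp only [secondT, Fin.cons_succ, z]
          have : ¬ (d+1+i.1 ≤ d) := by omega
          simp only [this, dite_false]
          congr 1
          omega
      rw [hfz, hsz] at h1
      exact h1
    have hxN : ∀ i, x i < N := by
      intro i
      have := hx.monotone (Fin.le_last i)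
      omega
    have hyN : ∀ i, y i < N := by
      intro i
      have := hy.monotone (Fin.le_last i)
      omega
    rw [key x hx hxm hxN, key y hy hym hyN, h00]
  · -- all unequal : contradiction
    exfalso
    have hP : ∀ z : Fin (2*d+1) → ℕ, StrictMono z → (∀ i, z i ∈ H) →
        F (firstT d z) ≠ F (secondT d z) := by
      intro z hz hm
      have h1 := hom z z0 hz hz0sm hm hz0mem
      simp only [decide_eq_decide] at h1
      exact fun hc => hcase (h1.mp hc)
    set a := e 0 with ha
    let u : ℕ → Fin d → ℕ := fun s i => e (1 + s*d + i.1)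
    have husm : ∀ s, StrictMono (u s) := fun s i j hij =>
      he_sm (by have := Fin.lt_iff_val_lt_val.mp hij; omega)
    have hua : ∀ s i, a < u s i := fun s i => he_sm (by omega)
    have hcsm : ∀ s, StrictMono (Fin.cons a (u s) : Fin (d+1) → ℕ) :=
      fun s => consSM (husm s) (hua s)
    have hmem' : ∀ s i, (Fin.cons a (u s) : Fin (d+1) → ℕ) i ∈ H := by
      intro s i
      induction i using Fin.cases with
      | zero => simpa using he_mem 0
      | succ i => simpa using he_mem _
    let g : ℕ → (ι → ℕ) := fun s => F (Fin.cons a (u s))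
    have hgle : ∀ s j, g s j ≤ a := by
      intro s j
      have := hreg (Fin.cons a (u s)) (hcsm s) j
      simpa using this
    have hfin : {v : ι → ℕ | ∀ j, v j ≤ a}.Finite := by
      have h4 : {v : ι → ℕ | ∀ j, v j ≤ a} = Set.pi Set.univ (fun _ => Set.Iic a) := by
        ext v; simp [Set.mem_pi, Pi.le_def]
      rw [h4]
      exact Set.Finite.pi (fun _ => Set.finite_Iic a)
    have hmaps : Set.MapsTo g Set.univ {v : ι → ℕ | ∀ j, v j ≤ a} :=
      fun s _ => hgle s
    obtain ⟨s, -, t, -, hst, hgeq⟩ :=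
      Set.infinite_univ.exists_ne_map_eq_of_mapsTo hmaps hfin
    have claim : ∀ s t : ℕ, s < t → g s ≠ g t := by
      intro s t hstlt
      have hmul : s*d + d ≤ t*d := by
        have h2 : (s+1)*d ≤ t*d := Nat.mul_le_mul_right d (Nat.succ_le_of_lt hstlt)
        rw [Nat.succ_mul] at h2
        exact h2
      let z : Fin (2*d+1) → ℕ := fun i =>
        if h0 : i.1 = 0 then a else
        if h : i.1 ≤ d then u s ⟨i.1 - 1, by omega⟩ else u t ⟨i.1 - (d+1), by omega⟩
      have hz0' : ∀ (i : Fin (2*d+1)) (h0 : i.1 = 0), z i = a := by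
        intro i h0; simp only [z]; rw [dif_pos h0]
      have hz1 : ∀ (i : Fin (2*d+1)) (h0 : ¬ i.1 = 0) (h : i.1 ≤ d),
          z i = u s ⟨i.1 - 1, by omega⟩ := by
        intro i h0 h; simp only [z]; rw [dif_neg h0, dif_pos h]
      have hz2 : ∀ (i : Fin (2*d+1)) (h0 : ¬ i.1 = 0) (h : ¬ i.1 ≤ d),
          z i = u t ⟨i.1 - (d+1), by omega⟩ := by
        intro i h0 h; simp only [z]; rw [dif_neg h0, dif_neg h]
      have huu : ∀ (i j : Fin d), 1 + s*d + i.1 < 1 + t*d + j.1 := by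
        intro i j
        have hi := i.2
        omega
      have hzsm : StrictMono z := by
        intro i j hij
        have hij' : i.1 < j.1 := hij
        have hjne : ¬ (j.1 = 0) := by omega
        show z i < z j
        by_cases hi0 : i.1 = 0
        · rw [hz0' i hi0]
          by_cases hj : j.1 ≤ d
          · rw [hz1 j hjne hj]; exact hua s _
          · rw [hz2 j hjne hj]; exact hua t _
        · by_cases hj : j.1 ≤ d
          · rw [hz1 j hjne hj]
            have hi : i.1 ≤ d := by omega
            rw [hz1 i hi0 hi]
            exact husm s (by simp only [Fin.lt_iff_val_lt_val]; omega)
          · rw [hz2 j hjne hj]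
            by_cases hi : i.1 ≤ d
            · rw [hz1 i hi0 hi]
              exact he_sm (huu _ _)
            · rw [hz2 i hi0 hi]
              exact husm t (by simp only [Fin.lt_iff_val_lt_val]; omega)
      have hzmem : ∀ i, z i ∈ H := by
        intro i
        by_cases hi0 : i.1 = 0
        · rw [hz0' i hi0]; exact he_mem 0
        · by_cases hi : i.1 ≤ d
          · rw [hz1 i hi0 hi]; exact he_mem _
          · rw [hz2 i hi0 hi]; exact he_mem _
      have h1 := hP z hzsm hzmem
      have hfz : firstT d z = Fin.cons a (u s) := by
        funext i
        induction i using Fin.cases with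
        | zero =>
          show z ⟨0, by omega⟩ = a
          exact hz0' _ rfl
        | succ i =>
          show z ⟨i.1+1, by omega⟩ = u s i
          rw [hz1 ⟨i.1+1, by omega⟩ (show ¬(i.1+1 = 0) by omega) (show i.1+1 ≤ d by omega)]
          exact congrArg (u s) (Fin.ext (show i.1+1-1 = i.1 by omega))
      have hsz : secondT d z = Fin.cons a (u t) := by
        funext i
        induction i using Fin.cases with
        | zero =>
          show z ⟨0, by omega⟩ = a
          exact hz0' _ rfl
        | succ i =>
          show z ⟨d+1+i.1, by omega⟩ = u t i
          rw [hz2 ⟨d+1+i.1, by omega⟩ (show ¬(d+1+i.1 = 0) by omega)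
            (show ¬(d+1+i.1 ≤ d) by omega)]
          exact congrArg (u t) (Fin.ext (show d+1+i.1-(d+1) = i.1 by omega))
      rw [hfz, hsz] at h1
      exact h1
    rcases hst.lt_or_gt with h | h
    · exact claim s t h hgeq
    · exact claim t s h hgeq.symm


theorem orderEmbOfFin_rank {B : Finset ℕ} {b : ℕ} (hb : b ∈ B)
    (hlt : (B.filter (· < b)).card < B.card) :
    B.orderEmbOfFin rfl ⟨(B.filter (· < b)).card, hlt⟩ = b := by
  set emb := B.orderEmbOfFin rfl with hemb
  have hbr : b ∈ Set.range emb := by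
    rw [hemb, Finset.range_orderEmbOfFin]; exact hb
  obtain ⟨j, hj⟩ := hbr
  have h5 : B.filter (· < b) = (Finset.univ.filter fun i => emb i < b).image (fun i => emb i) := by
    ext c
    simp only [Finset.mem_filter, Finset.mem_image, Finset.mem_univ, true_and]
    constructor
    · rintro ⟨hc, hcb⟩
      have : c ∈ Set.range emb := by rw [hemb, Finset.range_orderEmbOfFin]; exact hc
      obtain ⟨i, rfl⟩ := this
      exact ⟨i, hcb, rfl⟩
    · rintro ⟨i, hib, rfl⟩
      exact ⟨Finset.orderEmbOfFin_mem B rfl i, hib⟩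
  have hcard : (B.filter (· < b)).card = j.1 := by
    rw [h5, Finset.card_image_of_injective _ emb.injective]
    have h6 : (Finset.univ.filter fun i => emb i < b) = Finset.Iio j := by
      ext i
      simp only [Finset.mem_filter, Finset.mem_univ, true_and, Finset.mem_Iio]
      rw [← hj]
      exact emb.lt_iff_lt
    rw [h6, Fin.card_Iio]
  have h7 : (⟨(B.filter (· < b)).card, hlt⟩ : Fin B.card) = j := Fin.ext hcard
  rw [h7, hj]

theorem card_image_ker {k : ℕ} (x y : Fin k → ℕ) (s : Finset (Fin k))
    (h : ∀ i ∈ s, ∀ j ∈ s, (x i = x j ↔ y i = y j)) :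
    (s.image x).card = (s.image y).card := by
  induction s using Finset.induction with
  | empty => simp
  | @insert a s ha ih =>
    have h' : ∀ i ∈ s, ∀ j ∈ s, (x i = x j ↔ y i = y j) := fun i hi j hj =>
      h i (Finset.mem_insert_of_mem hi) j (Finset.mem_insert_of_mem hj)
    rw [Finset.image_insert, Finset.image_insert]
    by_cases hx : x a ∈ s.image x
    · have hy : y a ∈ s.image y := by
        obtain ⟨j, hj, hji⟩ := Finset.mem_image.mp hx
        exact Finset.mem_image.mpr ⟨j, hj,
          (h j (Finset.mem_insert_of_mem hj) a (Finset.mem_insert_self a s)).mp hji⟩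
      rw [Finset.insert_eq_self.mpr hx, Finset.insert_eq_self.mpr hy]
      exact ih h'
    · have hy : ¬ (y a ∈ s.image y) := by
        intro hy
        obtain ⟨j, hj, hji⟩ := Finset.mem_image.mp hy
        exact hx (Finset.mem_image.mpr ⟨j, hj,
          (h j (Finset.mem_insert_of_mem hj) a (Finset.mem_insert_self a s)).mpr hji⟩)
      rw [Finset.card_insert_of_notMem hx, Finset.card_insert_of_notMem hy, ih h']

theorem exists_eq_iInf {k : ℕ} (x : Fin (k+1) → ℕ) :
    ∃ i0, x i0 = (⨅ i, x i) ∧ ∀ i, x i0 ≤ x i := by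
  have h1 : (⨅ i, x i) = sInf (Set.range x) := rfl
  have hne : (Set.range x).Nonempty := Set.range_nonempty _
  obtain ⟨i0, hi0⟩ := Nat.sInf_mem hne
  exact ⟨i0, by rw [h1, hi0], fun i => by
    rw [hi0]; exact Nat.sInf_le ⟨i, rfl⟩⟩
/-- `x` and `y` have the same order type. -/
def SameOrderType {k : ℕ} (x y : Fin k → ℕ) : Prop :=
  ∀ i j, x i < x j ↔ y i < y j

/-- Theorem III. -/
theorem stmt_5 (k r p : ℕ) (hk : 0 < k) (hr : 0 < r) (hp : 0 < p) :
    ∃ n : ℕ, ∀ F : (Fin k → ℕ) → (Fin r → ℕ),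
      (∀ x : Fin k → ℕ, (∀ i, x i < n) → (⨆ j, F x j) ≤ ⨅ i, x i) →
      ∃ E : Finset ℕ, E ⊆ Finset.range n ∧ E.card = p ∧
        ∀ x y : Fin k → ℕ, (∀ i, x i ∈ E) → (∀ i, y i ∈ E) →
          SameOrderType x y → (⨅ i, x i) = (⨅ i, y i) → F x = F y := by
  obtain ⟨d, rfl⟩ : ∃ d, k = d + 1 := ⟨k - 1, (Nat.succ_pred_eq_of_pos hk).symm⟩
  by_contra hcon
  push_neg at hcon
  choose Fn hFn1 hFn2 using hcon
  set U := (Filter.hyperfilter ℕ : Ultrafilter ℕ) with hU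
  classical
  set g : ℕ → (Fin (d+1) → ℕ) → Fin r → ℕ :=
    fun n x j => if (∀ i, x i < n) then Fn n x j else 0 with hg
  have hgle : ∀ n (x : Fin (d+1) → ℕ) j, g n x j ≤ ⨅ i, x i := by
    intro n x j
    by_cases h : ∀ i, x i < n
    · have h1 : g n x j = Fn n x j := by rw [hg]; simp only [if_pos h]
      rw [h1]
      calc Fn n x j ≤ ⨆ j', Fn n x j' :=
            le_ciSup ((Set.finite_range _).bddAbove) j
        _ ≤ ⨅ i, x i := hFn1 n x h
    · have h1 : g n x j = 0 := by rw [hg]; simp only [if_neg h]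
      rw [h1]; exact Nat.zero_le _
  have hUex : ∀ (x : Fin (d+1) → ℕ) (j : Fin r),
      ∃ v, v ≤ (⨅ i, x i) ∧ {n | g n x j = v} ∈ U := by
    intro x j
    have hmem : Set.Iic (⨅ i, x i) ∈ Ultrafilter.map (fun n => g n x j) U := by
      rw [Ultrafilter.mem_map]
      have h1 : (fun n => g n x j) ⁻¹' (Set.Iic (⨅ i, x i)) = Set.univ := by
        ext n
        simp only [Set.mem_preimage, Set.mem_Iic, Set.mem_univ, iff_true]
        exact hgle n x j
      rw [h1]
      exact Filter.univ_mem
    obtain ⟨v, hv1, hv2⟩ := Ultrafilter.eq_pure_of_finite_mem (Set.finite_Iic _) hmem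
    refine ⟨v, hv1, ?_⟩
    have h3 : {v} ∈ Ultrafilter.map (fun n => g n x j) U := by
      rw [hv2]; exact Ultrafilter.mem_pure.mpr rfl
    rw [Ultrafilter.mem_map] at h3
    have h4 : (fun n => g n x j) ⁻¹' {v} = {n | g n x j = v} := by
      ext n; simp
    rwa [h4] at h3
  choose FF hFF1 hFF2 using hUex
  set G : (Fin (d+1) → ℕ) → ((Fin (d+1) → Fin (d+1)) × Fin r) → ℕ :=
    fun v σj => min (FF (v ∘ σj.1) σj.2) (v 0) with hGdef
  obtain ⟨H, Hinf, Hhom⟩ := myMinHomog d G (fun v _ σj => min_le_right _ _)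
  have Hinf' : (setOf (· ∈ H)).Infinite := Hinf
  set e : ℕ → ℕ := fun n => Nat.nth (· ∈ H) n with he
  have he_mem : ∀ n, e n ∈ H := fun n => Nat.nth_mem_of_infinite Hinf' n
  have he_sm : StrictMono e := fun n m h => (Nat.nth_lt_nth Hinf').mpr h
  have he_ge : ∀ n, n ≤ e n := fun n => he_sm.le_apply
  -- building increasing enumerations
  have build : ∀ (x : Fin (d+1) → ℕ), (∀ i, x i ∈ H) →
      ∃ v : Fin (d+1) → ℕ, StrictMono v ∧ (∀ m, v m ∈ H) ∧
        ∀ (i : Fin (d+1)) (h : (((Finset.image x Finset.univ).filter (· < x i)).card < d+1)),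
          v ⟨((Finset.image x Finset.univ).filter (· < x i)).card, h⟩ = x i := by
    intro x hxH
    set A := Finset.image x Finset.univ with hA
    have hxA : ∀ i, x i ∈ A := fun i => Finset.mem_image_of_mem x (Finset.mem_univ i)
    have hAH : ∀ a ∈ A, a ∈ H := by
      intro a ha
      obtain ⟨i, -, rfl⟩ := Finset.mem_image.mp ha
      exact hxH i
    set M := A.sup id + 1 with hM
    refine ⟨fun m => if h : m.1 < A.card then A.orderEmbOfFin rfl ⟨m.1, h⟩
      else e (M + m.1), ?_, ?_, ?_⟩
    · intro i j hij
      have hij' : i.1 < j.1 := hij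
      by_cases hi : i.1 < A.card <;> by_cases hjc : j.1 < A.card
      · simp only [dif_pos hi, dif_pos hjc]
        exact (A.orderEmbOfFin rfl).strictMono (Fin.mk_lt_mk.mpr hij')
      · simp only [dif_pos hi, dif_neg hjc]
        have h1 : A.orderEmbOfFin rfl ⟨i.1, hi⟩ ∈ A := Finset.orderEmbOfFin_mem A rfl _
        have h2 : A.orderEmbOfFin rfl ⟨i.1, hi⟩ ≤ A.sup id := Finset.le_sup (f := id) h1
        have h3 : M + j.1 ≤ e (M + j.1) := he_ge _
        omega
      · omega
      · simp only [dif_neg hi, dif_neg hjc]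
        exact he_sm (by omega)
    · intro m
      by_cases h : m.1 < A.card
      · simp only [dif_pos h]
        exact hAH _ (Finset.orderEmbOfFin_mem A rfl _)
      · simp only [dif_neg h]
        exact he_mem _
    · intro i h
      have h2 : (A.filter (· < x i)).card < A.card :=
        Finset.card_lt_card (Finset.filter_ssubset.mpr ⟨x i, hxA i, lt_irrefl _⟩)
      simp only [dif_pos h2]
      exact orderEmbOfFin_rank (hxA i) h2
  -- the main claim
  have claim : ∀ x y : Fin (d+1) → ℕ, (∀ i, x i ∈ H) → (∀ i, y i ∈ H) →
      SameOrderType x y → (⨅ i, x i) = (⨅ i, y i) → ∀ j, FF x j = FF y j := by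
    intro x y hxH hyH sot hmin j
    set A := Finset.image x Finset.univ with hA
    set B := Finset.image y Finset.univ with hB
    have hxA : ∀ i, x i ∈ A := fun i => Finset.mem_image_of_mem x (Finset.mem_univ i)
    have hyB : ∀ i, y i ∈ B := fun i => Finset.mem_image_of_mem y (Finset.mem_univ i)
    set rk : Fin (d+1) → ℕ := fun i => (A.filter (· < x i)).card with hrk
    set rkB : Fin (d+1) → ℕ := fun i => (B.filter (· < y i)).card with hrkB
    have hkerx : ∀ a b : Fin (d+1), x a = x b ↔ y a = y b := by
      intro a b
      have h1 := sot a b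
      have h2 := sot b a
      omega
    have hrkeq : ∀ i, rk i = rkB i := by
      intro i
      have hA' : A.filter (· < x i) = (Finset.univ.filter fun a => x a < x i).image x := by
        ext c
        simp only [hA, Finset.mem_filter, Finset.mem_image, Finset.mem_univ, true_and]
        constructor
        · rintro ⟨⟨a, rfl⟩, hc⟩
          exact ⟨a, hc, rfl⟩
        · rintro ⟨a, hc, rfl⟩
          exact ⟨⟨a, rfl⟩, hc⟩
      have hB' : B.filter (· < y i) = (Finset.univ.filter fun a => y a < y i).image y := by
        ext c
        simp only [hB, Finset.mem_filter, Finset.mem_image, Finset.mem_univ, true_and]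
        constructor
        · rintro ⟨⟨a, rfl⟩, hc⟩
          exact ⟨a, hc, rfl⟩
        · rintro ⟨a, hc, rfl⟩
          exact ⟨⟨a, rfl⟩, hc⟩
      have hfilt : (Finset.univ.filter fun a => x a < x i)
          = (Finset.univ.filter fun a => y a < y i) := by
        ext a
        simp only [Finset.mem_filter, Finset.mem_univ, true_and]
        exact sot a i
      rw [hrk, hrkB]
      simp only [hA', hB', hfilt]
      exact card_image_ker x y _ (fun a _ b _ => hkerx a b)
    have hrkltA : ∀ i, rk i < A.card := fun i =>
      Finset.card_lt_card (Finset.filter_ssubset.mpr ⟨x i, hxA i, lt_irrefl _⟩)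
    have hrkltB : ∀ i, rkB i < B.card := fun i =>
      Finset.card_lt_card (Finset.filter_ssubset.mpr ⟨y i, hyB i, lt_irrefl _⟩)
    have hAcard : A.card ≤ d+1 := by
      calc A.card ≤ Finset.univ.card := Finset.card_image_le
        _ = d+1 := by simp
    have hBcard : B.card ≤ d+1 := by
      calc B.card ≤ Finset.univ.card := Finset.card_image_le
        _ = d+1 := by simp
    set σ : Fin (d+1) → Fin (d+1) := fun i => ⟨rk i, lt_of_lt_of_le (hrkltA i) hAcard⟩
      with hσ
    obtain ⟨v, hvsm, hvH, hvcomp⟩ := build x hxH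
    obtain ⟨w, hwsm, hwH, hwcomp⟩ := build y hyH
    have hvx : ∀ i, v (σ i) = x i := fun i =>
      hvcomp i (lt_of_lt_of_le (hrkltA i) hAcard)
    have hwy : ∀ i, w (σ i) = y i := by
      intro i
      have h8 : σ i = ⟨rkB i, lt_of_lt_of_le (hrkltB i) hBcard⟩ := Fin.ext (hrkeq i)
      rw [h8]
      exact hwcomp i (lt_of_lt_of_le (hrkltB i) hBcard)
    have hv0 : v 0 = ⨅ i, x i := by
      obtain ⟨i0, hi0, hmin0⟩ := exists_eq_iInf x
      have hrk0 : rk i0 = 0 := by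
        rw [hrk]
        rw [Finset.card_eq_zero, Finset.filter_eq_empty_iff]
        intro a haA
        obtain ⟨i', -, rfl⟩ := Finset.mem_image.mp haA
        exact not_lt.mpr (hmin0 i')
      have h9 : σ i0 = 0 := Fin.ext hrk0
      rw [← hi0, ← hvx i0, h9]
    have hw0 : w 0 = ⨅ i, y i := by
      obtain ⟨i0, hi0, hmin0⟩ := exists_eq_iInf y
      have hrk0 : rkB i0 = 0 := by
        rw [hrkB]
        rw [Finset.card_eq_zero, Finset.filter_eq_empty_iff]
        intro a haB
        obtain ⟨i', -, rfl⟩ := Finset.mem_image.mp haB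
        exact not_lt.mpr (hmin0 i')
      have h9 : σ i0 = 0 := Fin.ext ((hrkeq i0).trans hrk0)
      rw [← hi0, ← hwy i0, h9]
    have h00 : v 0 = w 0 := by rw [hv0, hw0, hmin]
    have hG := Hhom v w hvsm hwsm hvH hwH h00
    have h10 : min (FF (v ∘ σ) j) (v 0) = min (FF (w ∘ σ) j) (w 0) := by
      have := congrFun hG (σ, j)
      simpa [hGdef] using this
    have hvσ : v ∘ σ = x := funext hvx
    have hwσ : w ∘ σ = y := funext hwy
    rw [hvσ, hwσ, hv0, hw0] at h10
    rw [min_eq_left (hFF1 x j), min_eq_left (hFF1 y j)] at h10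
    exact h10
  -- derive the contradiction
  obtain ⟨E, hEH, hEcard⟩ := Hinf.exists_subset_card_eq p
  have hbig : ({n | E.sup id < n} ∩
      ⋂ φj : ((Fin (d+1) → {a : ℕ // a ∈ E}) × Fin r),
        {n | g n (fun i => (φj.1 i).1) φj.2 = FF (fun i => (φj.1 i).1) φj.2}) ∈ U := by
    apply Filter.inter_mem
    · apply Filter.hyperfilter_le_cofinite
      rw [Filter.mem_cofinite]
      have h1 : {n | E.sup id < n}ᶜ = Set.Iic (E.sup id) := by
        ext n; simp [not_lt]
      rw [h1]
      exact Set.finite_Iic _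
    · rw [Filter.iInter_mem]
      intro φj
      exact hFF2 _ _
  obtain ⟨n, hn⟩ := Filter.nonempty_of_mem hbig
  have hn1 : E.sup id < n := hn.1
  have hn2 := hn.2
  have hErange : E ⊆ Finset.range n := by
    intro a ha
    rw [Finset.mem_range]
    have : a ≤ E.sup id := Finset.le_sup (f := id) ha
    omega
  obtain ⟨x, y, hxE, hyE, hsot, hmineq, hneq⟩ := hFn2 n E hErange hEcard
  have hagree : ∀ (x : Fin (d+1) → ℕ), (∀ i, x i ∈ E) → ∀ j, Fn n x j = FF x j := by
    intro x hxE j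
    have hxlt : ∀ i, x i < n := by
      intro i
      have : x i ≤ E.sup id := Finset.le_sup (f := id) (hxE i)
      omega
    have h12 : g n x j = FF x j := by
      have h13 := Set.mem_iInter.mp hn2 ⟨fun i => ⟨x i, hxE i⟩, j⟩
      exact h13
    rw [← h12, hg]
    simp only [if_pos hxlt]
  apply hneq
  funext j
  rw [hagree x hxE j, hagree y hyE j]
  exact claim x y (fun i => hEH (hxE i)) (fun i => hEH (hyE i)) hsot hmineq j
end

section
/- For all k, p > 0 there exists n such that for every regressive function F: S_k([n]) → [n] there exists E ∈ S_p([n]) such that: (i) for all x, y ∈ S_k(E), if min(x) = min(y) then F(x) = F(y); and (ii) for all x < y in E, 2^x < y. -/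
/-!
By compactness it suffices to treat a function `F` that is regressive on all of `ℕ`: if every `n`
had a counterexample `F n`, the limit of the `F n` along a nonprincipal ultrafilter would be
regressive, and a good `E` for the limit is, for suitable `n`, also good for `F n`.
For such `F`, an infinite min-homogeneous set comes from fusion: take `a n = min U n` along a
decreasing sequence of infinite sets, where on `U (n + 1)` the map `y ↦ F (insert (a n) y)` is
constant on `(k - 1)`-sets, by Ramsey's theorem for the `a n` colours below `a n`. The same fusion
proves Ramsey's theorem itself by induction on `k`. Inside the min-homogeneous set, the elements
of `E` are picked one at a time, each larger than `2 ^ a` for all earlier `a`.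
-/

open Filter Finset

def IsMinHomogeneous {α : Type*} (c : Finset ℕ → α) (k : ℕ) (T : Set ℕ) : Prop :=
  ∀ x y : Finset ℕ, ↑x ⊆ T → ↑y ⊆ T → x.card = k → y.card = k →
    sInf (↑x : Set ℕ) = sInf (↑y : Set ℕ) → c x = c y

lemma Finset.sInf_coe_mem_of_card_pos {x : Finset ℕ} (hx : 0 < x.card) : sInf (↑x : Set ℕ) ∈ x :=
  Nat.sInf_mem (card_pos.1 hx).to_set

lemma Finset.sInf_coe_insert_of_forall_le {a : ℕ} {y : Finset ℕ} (h : ∀ b ∈ y, a ≤ b) :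
    sInf (↑(insert a y) : Set ℕ) = a := by
  refine IsLeast.csInf_eq ⟨by simp, fun b hb => ?_⟩
  rcases mem_insert.1 hb with rfl | hb
  exacts [le_rfl, h b hb]

lemma Finset.eventually_subset_range (s : Finset ℕ) : ∀ᶠ n in atTop, s ⊆ range n := by
  obtain ⟨N, hN⟩ := s.exists_nat_subset_range
  exact eventually_atTop.2 ⟨N, fun n hn => hN.trans (range_mono hn)⟩

lemma Ultrafilter.exists_eventually_eq_of_finite {α β : Type*} {U : Ultrafilter α} {g : α → β}
    {s : Set β} (hs : s.Finite) (hg : ∀ᶠ n in (U : Filter α), g n ∈ s) :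
    ∃ v, ∀ᶠ n in (U : Filter α), g n = v := by
  obtain ⟨v, -, hv⟩ := (U.map g).eq_pure_of_finite_mem hs hg
  exact ⟨v, show {v} ∈ U.map g from hv ▸ rfl⟩

theorem exists_strictMono_colour_eq_of_sInf_eq {α : Type*} (c : Finset ℕ → α) (k : ℕ)
    {S : Set ℕ} (hS : S.Infinite)
    (step : ∀ U ⊆ S, U.Infinite → ∃ V ⊆ U, V.Infinite ∧ ∃ j, ∀ y : Finset ℕ, ↑y ⊆ V →
      y.card = k → sInf U ∉ y → c (insert (sInf U) y) = j) :
    ∃ a : ℕ → ℕ, StrictMono a ∧ (∀ n, a n ∈ S) ∧ ∃ col : ℕ → α, ∀ n (x : Finset ℕ),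
      ↑x ⊆ Set.range a → x.card = k + 1 → sInf (↑x : Set ℕ) = a n → c x = col n := by
  let D := {U : Set ℕ // U ⊆ S ∧ U.Infinite}
  choose V hVU hV j hj using fun U : D => step U.1 U.2.1 U.2.2
  let next (U : D) : D := ⟨V U \ {sInf U.1}, Set.sdiff_subset.trans ((hVU U).trans U.2.1),
    (hV U).sdiff (Set.finite_singleton _)⟩
  let u (n : ℕ) : D := next^[n] ⟨S, subset_rfl, hS⟩
  let a (n : ℕ) : ℕ := sInf (u n).1
  have hu_succ (n : ℕ) : (u (n + 1)).1 = V (u n) \ {a n} := by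
    simp only [u, Function.iterate_succ_apply']; rfl
  have hu_anti : Antitone fun n => (u n).1 := antitone_nat_of_succ_le fun n => by
    rw [hu_succ]; exact Set.sdiff_subset.trans (hVU _)
  have ha_mem (n : ℕ) : a n ∈ (u n).1 := Nat.sInf_mem (u n).2.2.nonempty
  have ha_later {m n : ℕ} (hmn : m < n) : a n ∈ V (u m) ∧ a m < a n := by
    have h : a n ∈ (u (m + 1)).1 := hu_anti hmn (ha_mem n)
    rw [hu_succ] at h
    exact ⟨h.1, (Nat.sInf_le (hVU _ h.1)).lt_of_ne (Ne.symm h.2)⟩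
  have ha : StrictMono a := fun m n hmn => (ha_later hmn).2
  refine ⟨a, ha, fun n => (u n).2.1 (ha_mem n), fun n => j (u n), fun n x hx hxk hxn => ?_⟩
  have hnx : a n ∈ x := hxn ▸ x.sInf_coe_mem_of_card_pos (by omega)
  have hy : ↑(x.erase (a n)) ⊆ V (u n) := by
    intro b hb
    obtain ⟨hbn, hbx⟩ := mem_erase.1 hb
    obtain ⟨m, rfl⟩ := hx hbx
    have : a n < a m := (hxn ▸ Nat.sInf_le hbx).lt_of_ne (Ne.symm hbn)
    exact (ha_later (ha.lt_iff_lt.1 this)).1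
  have := hj (u n) (x.erase (a n)) hy (by rw [card_erase_of_mem hnx, hxk]; rfl) (notMem_erase _ _)
  rwa [insert_erase hnx] at this

theorem Set.Infinite.exists_infinite_monochromatic {α : Type*} [Finite α] (k : ℕ) :
    ∀ (c : Finset ℕ → α) {S : Set ℕ}, S.Infinite →
      ∃ T ⊆ S, T.Infinite ∧ ∃ j, ∀ x : Finset ℕ, ↑x ⊆ T → x.card = k → c x = j := by
  induction k with
  | zero =>
    exact fun c S hS => ⟨S, subset_rfl, hS, c ∅, fun x _ hx => by rw [Finset.card_eq_zero.1 hx]⟩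
  | succ k ih =>
    intro c S hS
    obtain ⟨a, ha, haS, col, hcol⟩ := exists_strictMono_colour_eq_of_sInf_eq c k hS
      fun U _ hU => by
        obtain ⟨T, hTU, hT, j, hj⟩ := ih (fun y => c (insert (sInf U) y)) hU
        exact ⟨T, hTU, hT, j, fun y hy hyk _ => hj y hy hyk⟩
    obtain ⟨j, hj⟩ := Finite.exists_infinite_fiber col
    refine ⟨a '' (col ⁻¹' {j}), ?_, (Set.infinite_coe_iff.1 hj).image ha.injective.injOn, j, ?_⟩
    · rintro _ ⟨n, -, rfl⟩
      exact haS n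
    · intro x hx hxk
      obtain ⟨n, hn, hxn⟩ := hx (x.sInf_coe_mem_of_card_pos (by omega))
      exact (hcol n x (hx.trans (Set.image_subset_range _ _)) hxk hxn.symm).trans hn

theorem exists_infinite_isMinHomogeneous_of_regressive (k : ℕ) (F : Finset ℕ → ℕ)
    (hF : ∀ x : Finset ℕ, x.card = k + 1 → 0 < sInf (↑x : Set ℕ) → F x < sInf (↑x : Set ℕ)) :
    ∃ M ⊆ Set.Ioi 0, M.Infinite ∧ IsMinHomogeneous F (k + 1) M := by
  obtain ⟨a, ha, haS, col, hcol⟩ := exists_strictMono_colour_eq_of_sInf_eq F k (Set.Ioi_infinite 0)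
    fun U hUS hU => by
      set m := sInf U
      have hm : 0 < m := hUS (Nat.sInf_mem hU.nonempty)
      -- the clamp is harmless on the sets that matter, where `F` is regressive
      obtain ⟨T, hTU, hT, j, hj⟩ := hU.exists_infinite_monochromatic k
        fun y => (⟨min (F (insert m y)) m, by omega⟩ : Fin (m + 1))
      refine ⟨T, hTU, hT, j, fun y hy hyk hmy => ?_⟩
      have hmin : sInf (↑(insert m y) : Set ℕ) = m :=
        sInf_coe_insert_of_forall_le fun b hb => Nat.sInf_le (hTU (hy hb))
      have hlt : F (insert m y) < m := by
        have := hF _ (by rw [card_insert_of_notMem hmy, hyk]) (hmin ▸ hm)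
        rwa [hmin] at this
      simpa [Fin.ext_iff, hlt.le] using hj y hy hyk
  refine ⟨Set.range a, Set.range_subset_iff.2 haS, Set.infinite_range_of_injective ha.injective,
    fun x y hx hy hxk hyk hxy => ?_⟩
  obtain ⟨n, hn⟩ := hx (x.sInf_coe_mem_of_card_pos (by omega))
  rw [hcol n x hx hxk hn.symm, hcol n y hy hyk (hxy ▸ hn.symm)]

theorem Set.Infinite.exists_finset_card_eq_forall_lt {M : Set ℕ} (hM : M.Infinite) (f : ℕ → ℕ)
    (p : ℕ) : ∃ E : Finset ℕ, ↑E ⊆ M ∧ E.card = p ∧ ∀ a ∈ E, ∀ b ∈ E, a < b → f a < b := by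
  induction p with
  | zero => exact ⟨∅, by simp, rfl, by simp⟩
  | succ p ih =>
    obtain ⟨E, hEM, hE, hEf⟩ := ih
    obtain ⟨m, hmM, hm⟩ := hM.exists_gt (max (E.sup id) (E.sup f))
    have hlt (a : ℕ) (ha : a ∈ E) : a < m ∧ f a < m := by
      rw [max_lt_iff] at hm
      exact ⟨(le_sup (f := id) ha).trans_lt hm.1, (le_sup ha).trans_lt hm.2⟩
    have hmE : m ∉ E := fun h => (hlt m h).1.false
    refine ⟨insert m E, by simpa [Set.insert_subset_iff] using ⟨hmM, hEM⟩,
      by rw [card_insert_of_notMem hmE, hE], ?_⟩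
    simp only [Finset.mem_insert]
    rintro a (rfl | ha) b (rfl | hb) hab
    · exact absurd hab (lt_irrefl _)
    · exact absurd hab (hlt b hb).1.asymm
    · exact (hlt a ha).2
    · exact hEf a ha b hb hab

theorem exists_regressive_limit (k : ℕ) (Fs : ℕ → Finset ℕ → ℕ)
    (hreg : ∀ n, ∀ x : Finset ℕ, x ⊆ range n → x.card = k → 0 < sInf (↑x : Set ℕ) →
      Fs n x < sInf (↑x : Set ℕ)) :
    ∃ F : Finset ℕ → ℕ,
      (∀ x : Finset ℕ, x.card = k → 0 < sInf (↑x : Set ℕ) → F x < sInf (↑x : Set ℕ)) ∧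
      ∀ E : Finset ℕ, ∃ n, E ⊆ range n ∧
        ∀ x ⊆ E, x.card = k → 0 < sInf (↑x : Set ℕ) → Fs n x = F x := by
  let U := hyperfilter ℕ
  have h_range (s : Finset ℕ) : ∀ᶠ n in (U : Filter ℕ), s ⊆ range n :=
    (Nat.cofinite_eq_atTop ▸ hyperfilter_le_cofinite) s.eventually_subset_range
  have hlim (x : Finset ℕ) (hxk : x.card = k) (hx : 0 < sInf (↑x : Set ℕ)) :
      ∃ v < sInf (↑x : Set ℕ), ∀ᶠ n in (U : Filter ℕ), Fs n x = v := by
    have hlt : ∀ᶠ n in (U : Filter ℕ), Fs n x ∈ Set.Iio (sInf (↑x : Set ℕ)) :=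
      (h_range x).mono fun n hn => hreg n x hn hxk hx
    obtain ⟨v, hv⟩ := U.exists_eventually_eq_of_finite (Set.finite_Iio _) hlt
    obtain ⟨n, hn, rfl⟩ := (hlt.and hv).exists
    exact ⟨Fs n x, hn, hv⟩
  choose! F hF_lt hF_lim using hlim
  refine ⟨F, hF_lt, fun E => ?_⟩
  have hagree : ∀ᶠ n in (U : Filter ℕ), ∀ x ∈ E.powerset, x.card = k →
      0 < sInf (↑x : Set ℕ) → Fs n x = F x := by
    refine (eventually_all_finset _).2 fun x _ => ?_
    simp only [eventually_imp_distrib_left]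
    exact hF_lim x
  obtain ⟨n, hn, hEn⟩ := (hagree.and (h_range E)).exists
  exact ⟨n, hEn, fun x hx => hn x (mem_powerset.2 hx)⟩

theorem stmt_6_general (k p : ℕ) (hk : 0 < k) :
    ∃ n : ℕ, ∀ F : Finset ℕ → ℕ,
      (∀ x : Finset ℕ, x ⊆ Finset.range n → x.card = k → F x < n) →
      (∀ x : Finset ℕ, x ⊆ Finset.range n → x.card = k →
        0 < sInf (↑x : Set ℕ) → F x < sInf (↑x : Set ℕ)) →
      ∃ E : Finset ℕ, E ⊆ Finset.range n ∧ E.card = p ∧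
        (∀ x y : Finset ℕ, x ⊆ E → y ⊆ E → x.card = k → y.card = k →
          sInf (↑x : Set ℕ) = sInf (↑y : Set ℕ) → F x = F y) ∧
        (∀ a ∈ E, ∀ b ∈ E, a < b → 2 ^ a < b) := by
  obtain ⟨k, rfl⟩ := Nat.exists_eq_add_one_of_ne_zero hk.ne'
  by_contra! h
  choose Fs _ hreg hbad using h
  obtain ⟨F, hF, hFs⟩ := exists_regressive_limit (k + 1) Fs hreg
  obtain ⟨M, hMpos, hM, hFM⟩ := exists_infinite_isMinHomogeneous_of_regressive k F hF
  obtain ⟨E, hEM, hEp, hE⟩ := hM.exists_finset_card_eq_forall_lt (2 ^ ·) p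
  obtain ⟨n, hEn, hFsF⟩ := hFs E
  have hpos {x : Finset ℕ} (hxE : x ⊆ E) (hxk : x.card = k + 1) : 0 < sInf (↑x : Set ℕ) :=
    hMpos (hEM (hxE (x.sInf_coe_mem_of_card_pos (by omega))))
  obtain ⟨a, ha, b, hb, hab, hba⟩ := hbad n E hEn hEp fun x y hxE hyE hxk hyk hxy => by
    rw [hFsF x hxE hxk (hpos hxE hxk), hFsF y hyE hyk (hpos hyE hyk)]
    exact hFM x y ((coe_subset.2 hxE).trans hEM) ((coe_subset.2 hyE).trans hEM) hxk hyk hxy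
  exact (hE a ha b hb hab).not_ge hba

/-- Theorem IV: Theorem I together with exponential growth of `E`. -/
theorem stmt_6 (k p : ℕ) (hk : 0 < k) (hp : 0 < p) :
    ∃ n : ℕ, ∀ F : Finset ℕ → ℕ,
      (∀ x : Finset ℕ, x ⊆ Finset.range n → x.card = k → F x < n) →
      (∀ x : Finset ℕ, x ⊆ Finset.range n → x.card = k →
        0 < sInf (↑x : Set ℕ) → F x < sInf (↑x : Set ℕ)) →
      ∃ E : Finset ℕ, E ⊆ Finset.range n ∧ E.card = p ∧
        (∀ x y : Finset ℕ, x ⊆ E → y ⊆ E → x.card = k → y.card = k →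
          sInf (↑x : Set ℕ) = sInf (↑y : Set ℕ) → F x = F y) ∧
        (∀ a ∈ E, ∀ b ∈ E, a < b → 2 ^ a < b) :=
  stmt_6_general k p hk
end

section
/- If Proposition A for lex #-decreasing holds, then Proposition A for #-decreasing holds. That is: if for all k, p > 0 and every lex #-decreasing function assignment U for ℕ^k there exist a finite A ⊆ ℕ^k and E ⊆ ℕ with |E| = p and E^k ⊆ A such that U(A) has at most k^k regressive values on E^k, then the same statement holds with 'lex #-decreasing' replaced by '#-decreasing'. -/
/-- A function assignment for `α`: to each finite `A ⊆ α` it assigns a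
function from `A` to `A` (values outside `A` are irrelevant). -/
structure FunAssign (α : Type*) where
  U : Finset α → α → α
  maps : ∀ A : Finset α, ∀ x ∈ A, U A x ∈ A

/-- `f` has at most `c` regressive values on `E^k`. -/
def hasAtMostRegVals {k : ℕ} (f : (Fin k → ℕ) → (Fin k → ℕ))
    (E : Finset ℕ) (c : ℕ) : Prop :=
  {y : Fin k → ℕ | ∃ x : Fin k → ℕ, (∀ i, x i ∈ E) ∧ f x = y ∧
      (⨆ i, y i) < ⨅ i, x i}.Finite ∧
  {y : Fin k → ℕ | ∃ x : Fin k → ℕ, (∀ i, x i ∈ E) ∧ f x = y ∧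
      (⨆ i, y i) < ⨅ i, x i}.ncard ≤ c

/-- Strict lexicographic order on `ℕ^k`. -/
def lexLt {k : ℕ} (x y : Fin k → ℕ) : Prop :=
  ∃ i : Fin k, (∀ j : Fin k, j < i → x j = y j) ∧ x i < y i

/-- `V` is #-decreasing (w.r.t. the sup norm). -/
def SharpDecreasing {k : ℕ} (V : FunAssign (Fin k → ℕ)) : Prop :=
  ∀ (A : Finset (Fin k → ℕ)) (x : Fin k → ℕ),
    (∀ y ∈ A, V.U A y = V.U (insert x A) y) ∨
    ∃ y ∈ A, (⨆ i, x i) < (⨆ i, y i) ∧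
      (⨆ i, V.U (insert x A) y i) < (⨆ i, V.U A y i)

/-- `V` is lex #-decreasing. -/
def LexSharpDecreasing {k : ℕ} (V : FunAssign (Fin k → ℕ)) : Prop :=
  ∀ (A : Finset (Fin k → ℕ)) (x : Fin k → ℕ),
    (∀ y ∈ A, V.U A y = V.U (insert x A) y) ∨
    ∃ y ∈ A, lexLt x y ∧ lexLt (V.U (insert x A) y) (V.U A y)

/-!
Embed `ℕ^k` into `ℕ^(k+1)` by `x ↦ (|x|, x)` and transport a #-decreasing `V` along it, extending
by the identity off the image. The new first coordinate turns `|·|`-comparisons into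
lexicographic ones, so the transported assignment is lex #-decreasing, and the embedding
preserves `|·|` and `min`. The lex hypothesis in dimension `k + 1` therefore yields `A` and an
arbitrarily large `E'` on whose cube `V(A)` has at most `(k+1)^(k+1)` regressive values.

Colour every `u ⊆ E'` by the map sending an order pattern `π` to the regressive value (if any) of
the tuple with values in `u` and pattern `π`. There are boundedly many colours, so the finite
Ramsey theorem gives `E ⊆ E'` of size `p` on which the colour of `u` depends only on `#u`. On
`E^k` the regressive value of a tuple then depends only on its order pattern, and there are at
most `k^k` of those.
-/

open Finset

section Ramsey

variable (α γ : Type*)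

def RamseyBound (k M m q : ℕ) : Prop :=
  ∀ S : Finset α, q ≤ #S → ∀ (Φ : Finset α → γ) (t : Finset γ), (∀ u, Φ u ∈ t) → #t ≤ M →
    ∃ T ⊆ S, #T = m ∧ ∃ y ∈ t, ∀ u ⊆ T, #u = k → Φ u = y

variable {α γ}

theorem ramseyBound_zero (M m : ℕ) : RamseyBound α γ 0 M m m := by
  intro S hS Φ t hΦ _
  obtain ⟨T, hTS, hT⟩ := exists_subset_card_eq hS
  exact ⟨T, hTS, hT, Φ ∅, hΦ ∅, fun u _ hu => by rw [card_eq_zero.mp hu]⟩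

variable [LinearOrder α]

theorem exists_endHomogeneous_chain {k M : ℕ} (hR : ∀ m, ∃ q, RamseyBound α γ k M m q) (L : ℕ) :
    ∃ q, ∀ S : Finset α, q ≤ #S → ∀ (Φ : Finset α → γ) (t : Finset γ), (∀ u, Φ u ∈ t) →
      #t ≤ M → ∃ C ⊆ S, #C = L ∧ ∃ χ : α → γ, ∀ a ∈ C, χ a ∈ t ∧
        ∀ u ⊆ C.filter (a < ·), #u = k → Φ (insert a u) = χ a := by
  induction L with
  | zero => exact ⟨0, fun S _ Φ _ _ _ => ⟨∅, empty_subset S, rfl, fun _ => Φ ∅, by simp⟩⟩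
  | succ L ih =>
    obtain ⟨qc, hqc⟩ := ih
    obtain ⟨qr, hqr⟩ := hR qc
    refine ⟨qr + 1, fun S hS Φ t hΦ ht => ?_⟩
    have hSne : S.Nonempty := card_pos.mp (by omega)
    -- Thin `S \ {min S}` so that the colour of `insert (min S) u` is constant, then recurse.
    set a₀ := S.min' hSne
    obtain ⟨T, hTS, hTcard, y, hyt, hy⟩ :=
      hqr (S.erase a₀) (by rw [card_erase_of_mem (S.min'_mem hSne)]; omega)
        (fun u => Φ (insert a₀ u)) t (fun u => hΦ _) ht
    obtain ⟨C, hCT, hCcard, χ, hχ⟩ := hqc T hTcard.ge Φ t hΦ ht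
    have ha₀C : a₀ ∉ C := fun h => by simpa using hTS (hCT h)
    have ha₀lt : ∀ a ∈ C, a₀ < a := fun a ha => S.min'_lt_of_mem_erase_min' hSne (hTS (hCT ha))
    refine ⟨insert a₀ C, insert_subset (S.min'_mem hSne) ((hCT.trans hTS).trans (erase_subset _ _)),
      by rw [card_insert_of_notMem ha₀C, hCcard], Function.update χ a₀ y, ?_⟩
    intro a ha
    rcases mem_insert.mp ha with rfl | haC
    · refine ⟨by simpa using hyt, fun u hu hucard => ?_⟩
      rw [Function.update_self]
      refine hy u (fun b hb => hCT ?_) hucard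
      have hb' := mem_filter.mp (hu hb)
      exact (mem_insert.mp hb'.1).resolve_left (ne_of_gt hb'.2)
    · have hne : a ≠ a₀ := (ne_of_gt (ha₀lt a haC))
      rw [Function.update_of_ne hne]
      refine ⟨(hχ a haC).1, fun u hu => (hχ a haC).2 u fun b hb => ?_⟩
      have hb' := mem_filter.mp (hu hb)
      exact mem_filter.mpr ⟨(mem_insert.mp hb'.1).resolve_left
        (fun h => absurd hb'.2 (h ▸ (ha₀lt a haC).not_gt)), hb'.2⟩

theorem exists_ramseyBound (k M m : ℕ) : ∃ q, RamseyBound α γ k M m q := by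
  induction k generalizing m with
  | zero => exact ⟨m, ramseyBound_zero M m⟩
  | succ k ih =>
    obtain ⟨q, hq⟩ := exists_endHomogeneous_chain ih (M * m)
    refine ⟨q, fun S hS Φ t hΦ ht => ?_⟩
    obtain ⟨C, hCS, hCcard, χ, hχ⟩ := hq S hS Φ t hΦ ht
    classical
    obtain ⟨y, hyt, hy⟩ := exists_le_card_fiber_of_mul_le_card_of_maps_to
      (fun a ha => (hχ a ha).1) ⟨Φ ∅, hΦ ∅⟩ (by rw [hCcard]; exact Nat.mul_le_mul_right m ht)
    obtain ⟨T, hTC, hTcard⟩ := exists_subset_card_eq hy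
    refine ⟨T, (hTC.trans (filter_subset _ _)).trans hCS, hTcard, y, hyt, fun w hwT hwcard => ?_⟩
    have hwne : w.Nonempty := card_pos.mp (by omega)
    have hb₀ := mem_filter.mp (hTC (hwT (w.min'_mem hwne)))
    rw [← insert_erase (w.min'_mem hwne), ← hb₀.2]
    refine (hχ _ hb₀.1).2 _ (fun b hb => mem_filter.mpr ⟨?_, w.min'_lt_of_mem_erase_min' hwne hb⟩)
      (by rw [card_erase_of_mem (w.min'_mem hwne), hwcard, Nat.add_sub_cancel])
    exact (mem_filter.mp (hTC (hwT (mem_of_mem_erase hb)))).1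

theorem exists_homogeneous_of_card_le_all (k M m : ℕ) : ∃ q, ∀ S : Finset α, q ≤ #S →
    ∀ (Φ : Finset α → γ) (t : Finset γ), (∀ u, Φ u ∈ t) → #t ≤ M →
      ∃ T ⊆ S, #T = m ∧ ∀ u ⊆ T, ∀ v ⊆ T, #u = #v → #u ≤ k → Φ u = Φ v := by
  induction k generalizing m with
  | zero =>
    refine ⟨m, fun S hS Φ t hΦ ht => ?_⟩
    obtain ⟨T, hTS, hTcard⟩ := exists_subset_card_eq hS
    refine ⟨T, hTS, hTcard, fun u _ v _ huv hu => ?_⟩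
    obtain rfl := card_eq_zero.mp (Nat.le_zero.mp hu)
    rw [card_eq_zero.mp (huv.symm.trans card_empty)]
  | succ k ih =>
    obtain ⟨q₁, hq₁⟩ := ih m
    obtain ⟨q, hq⟩ := exists_ramseyBound (α := α) (γ := γ) (k + 1) M q₁
    refine ⟨q, fun S hS Φ t hΦ ht => ?_⟩
    obtain ⟨T₁, hT₁S, hT₁card, y, -, hy⟩ := hq S hS Φ t hΦ ht
    obtain ⟨T, hTT₁, hTcard, hT⟩ := hq₁ T₁ hT₁card.ge Φ t hΦ ht
    refine ⟨T, hTT₁.trans hT₁S, hTcard, fun u hu v hv huv hk => ?_⟩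
    rcases hk.lt_or_eq with hk | hk
    · exact hT u hu v hv huv (Nat.lt_succ_iff.mp hk)
    · rw [hy u (hu.trans hTT₁) hk, hy v (hv.trans hTT₁) (huv ▸ hk)]

end Ramsey

section Regressive

variable {k : ℕ} {γ : Type*}

lemma count_mem_lt_card {s : Finset ℕ} {n : ℕ} (hn : n ∈ s) : Nat.count (· ∈ s) n < #s := by
  have := Nat.count_lt_card (p := (· ∈ s)) s.finite_toSet hn
  rwa [finite_toSet_toFinset] at this

def orderPattern (x : Fin k → ℕ) (i : Fin k) : Fin k :=
  ⟨Nat.count (· ∈ univ.image x) (x i),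
    (count_mem_lt_card (mem_image_of_mem x (mem_univ i))).trans_le (card_image_le.trans (by simp))⟩

noncomputable def patternColoring (c : (Fin k → ℕ) → γ) (u : Finset ℕ) (π : Fin k → Fin k) : γ :=
  c fun i => Nat.nth (· ∈ u) (π i)

lemma patternColoring_image_orderPattern (c : (Fin k → ℕ) → γ) (x : Fin k → ℕ) :
    patternColoring c (univ.image x) (orderPattern x) = c x := by
  unfold patternColoring orderPattern
  congr 1
  funext i
  exact Nat.nth_count (mem_image_of_mem x (mem_univ i))

lemma card_image_orderPattern (x : Fin k → ℕ) :
    #(univ.image (orderPattern x)) = #(univ.image x) := by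
  calc #(univ.image (orderPattern x))
      = #((univ.image x).image (Nat.count (· ∈ univ.image x))) := by
        rw [← card_image_of_injective _ Fin.val_injective, image_image, image_image]; rfl
    _ = #(univ.image x) := card_image_of_injOn fun a ha b hb hab => Nat.count_injective ha hb hab

lemma eq_of_orderPattern_eq {c : (Fin k → ℕ) → γ} {T : Finset ℕ}
    (hT : ∀ u ⊆ T, ∀ v ⊆ T, #u = #v → #u ≤ k → patternColoring c u = patternColoring c v)
    {x x' : Fin k → ℕ} (hx : ∀ i, x i ∈ T) (hx' : ∀ i, x' i ∈ T)
    (h : orderPattern x = orderPattern x') : c x = c x' := by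
  have hsub : ∀ y : Fin k → ℕ, (∀ i, y i ∈ T) → univ.image y ⊆ T := fun y hy b hb => by
    obtain ⟨i, -, rfl⟩ := mem_image.mp hb
    exact hy i
  have hcard := hT _ (hsub x hx) _ (hsub x' hx')
    (by rw [← card_image_orderPattern, h, card_image_orderPattern])
    (card_image_le.trans (by simp))
  rw [← patternColoring_image_orderPattern c x, ← patternColoring_image_orderPattern c x', hcard, h]

def regressiveValues (f : (Fin k → ℕ) → (Fin k → ℕ)) (E : Finset ℕ) : Set (Fin k → ℕ) :=
  {y | ∃ x : Fin k → ℕ, (∀ i, x i ∈ E) ∧ f x = y ∧ (⨆ i, y i) < ⨅ i, x i}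

theorem hasAtMostRegVals_pow_self_of_orderPattern {f : (Fin k → ℕ) → (Fin k → ℕ)} {E : Finset ℕ}
    (h : ∀ x x', (∀ i, x i ∈ E) → (∀ i, x' i ∈ E) → orderPattern x = orderPattern x' →
      (⨆ i, f x i) < ⨅ i, x i → (⨆ i, f x' i) < ⨅ i, x' i → f x = f x') :
    hasAtMostRegVals f E (k ^ k) := by
  classical
  let g : (Fin k → Fin k) → (Fin k → ℕ) := fun π =>
    if hπ : ∃ x, (∀ i, x i ∈ E) ∧ (⨆ i, f x i) < ⨅ i, x i ∧ orderPattern x = π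
    then f hπ.choose else 0
  have hsub : regressiveValues f E ⊆ ↑(univ.image g) := by
    rintro _ ⟨x, hxE, rfl, hx⟩
    have hπ : ∃ x', (∀ i, x' i ∈ E) ∧ (⨆ i, f x' i) < ⨅ i, x' i ∧
        orderPattern x' = orderPattern x := ⟨x, hxE, hx, rfl⟩
    obtain ⟨hE', hreg', hpat'⟩ := hπ.choose_spec
    refine mem_image.mpr ⟨orderPattern x, mem_univ _, ?_⟩
    simp only [g, dif_pos hπ]
    exact h _ _ hE' hxE hpat' hreg' hx
  refine ⟨(univ.image g).finite_toSet.subset hsub, ?_⟩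
  calc (regressiveValues f E).ncard ≤ #(univ.image g) := by
        rw [← Set.ncard_coe_finset]; exact Set.ncard_le_ncard hsub (univ.image g).finite_toSet
    _ ≤ k ^ k := card_image_le.trans (by simp)

theorem exists_subset_hasAtMostRegVals_pow_self (k N p : ℕ) :
    ∃ q, ∀ (f : (Fin k → ℕ) → (Fin k → ℕ)) (E' : Finset ℕ), q ≤ #E' → hasAtMostRegVals f E' N →
      ∃ E ⊆ E', #E = p ∧ hasAtMostRegVals f E (k ^ k) := by
  classical
  obtain ⟨q, hq⟩ := exists_homogeneous_of_card_le_all (α := ℕ)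
    (γ := (Fin k → Fin k) → Option (Fin k → ℕ)) k ((N + 1) ^ k ^ k) p
  refine ⟨q, fun f E' hE' ⟨hfin, hcard⟩ => ?_⟩
  let c : (Fin k → ℕ) → Option (Fin k → ℕ) := fun x =>
    if (∀ i, x i ∈ E') ∧ (⨆ i, f x i) < ⨅ i, x i then some (f x) else none
  let P := insert none (hfin.toFinset.image some)
  have hcP : ∀ x, c x ∈ P := fun x => by
    by_cases hx : (∀ i, x i ∈ E') ∧ (⨆ i, f x i) < ⨅ i, x i
    · simp only [c, if_pos hx]
      exact mem_insert_of_mem (mem_image_of_mem _ (hfin.mem_toFinset.mpr ⟨x, hx.1, rfl, hx.2⟩))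
    · simp only [c, if_neg hx]
      exact mem_insert_self _ _
  have hPcard : #P ≤ N + 1 := by
    calc #P ≤ #(hfin.toFinset.image some) + 1 := card_insert_le _ _
      _ ≤ N + 1 := by
        rw [card_image_of_injective _ (Option.some_injective _),
          ← Set.ncard_eq_toFinset_card _ hfin]
        omega
  obtain ⟨E, hEE', hEcard, hE⟩ := hq E' hE' (patternColoring c) (Fintype.piFinset fun _ => P)
    (fun u => Fintype.mem_piFinset.mpr fun π => hcP _)
    (by simpa [Fintype.card_piFinset] using Nat.pow_le_pow_left hPcard (k ^ k))
  refine ⟨E, hEE', hEcard,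
    hasAtMostRegVals_pow_self_of_orderPattern fun x x' hx hx' hpat hreg hreg' => ?_⟩
  have := eq_of_orderPattern_eq hE hx hx' hpat
  simp only [c, if_pos (And.intro (fun i => hEE' (hx i)) hreg),
    if_pos (And.intro (fun i => hEE' (hx' i)) hreg')] at this
  exact Option.some_injective _ this

noncomputable def supCons (x : Fin k → ℕ) : Fin (k + 1) → ℕ := Fin.cons (⨆ i, x i) x

lemma tail_supCons (x : Fin k → ℕ) : Fin.tail (supCons x) = x := Fin.tail_cons _ _

lemma supCons_injective : Function.Injective (supCons (k := k)) :=
  Function.LeftInverse.injective tail_supCons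

lemma iSup_supCons (hk : 0 < k) (x : Fin k → ℕ) : ⨆ i, supCons x i = ⨆ i, x i := by
  have : Nonempty (Fin k) := ⟨⟨0, hk⟩⟩
  rw [iSup, supCons, Fin.range_cons,
    csSup_insert (Set.finite_range x).bddAbove (Set.range_nonempty x)]
  exact sup_idem _

lemma iInf_supCons (hk : 0 < k) (x : Fin k → ℕ) : ⨅ i, supCons x i = ⨅ i, x i := by
  have : Nonempty (Fin k) := ⟨⟨0, hk⟩⟩
  rw [iInf, supCons, Fin.range_cons, csInf_insert (OrderBot.bddBelow _) (Set.range_nonempty x)]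
  exact inf_eq_right.mpr (ciInf_le_ciSup (OrderBot.bddBelow _) (Set.finite_range x).bddAbove)

lemma supCons_mem {E : Finset ℕ} (hk : 0 < k) {x : Fin k → ℕ} (hx : ∀ i, x i ∈ E) :
    ∀ i, supCons x i ∈ E := by
  have : Nonempty (Fin k) := ⟨⟨0, hk⟩⟩
  refine Fin.cases ?_ hx
  obtain ⟨i, hi⟩ := exists_eq_ciSup_of_finite (f := x)
  simpa [supCons, ← hi] using hx i

noncomputable def supConsPreimage (A' : Finset (Fin (k + 1) → ℕ)) : Finset (Fin k → ℕ) :=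
  A'.preimage supCons supCons_injective.injOn

lemma mem_supConsPreimage {A' : Finset (Fin (k + 1) → ℕ)} {x : Fin k → ℕ} :
    x ∈ supConsPreimage A' ↔ supCons x ∈ A' :=
  Finset.mem_preimage

lemma supConsPreimage_insert_supCons (A' : Finset (Fin (k + 1) → ℕ)) (x : Fin k → ℕ) :
    supConsPreimage (insert (supCons x) A') = insert x (supConsPreimage A') := by
  ext z
  simp [mem_supConsPreimage, supCons_injective.eq_iff]

lemma supConsPreimage_insert_of_notMem_range (A' : Finset (Fin (k + 1) → ℕ)) {x' : Fin (k + 1) → ℕ}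
    (hx' : x' ∉ Set.range supCons) :
    supConsPreimage (insert x' A') = supConsPreimage A' := by
  ext z
  simp only [mem_supConsPreimage, mem_insert, or_iff_right_iff_imp]
  rintro rfl
  exact absurd ⟨z, rfl⟩ hx'

lemma lexLt_of_lt_zero {a b : Fin (k + 1) → ℕ} (h : a 0 < b 0) : lexLt a b :=
  ⟨0, fun j hj => absurd hj (Fin.not_lt_zero j), h⟩

open Classical in
noncomputable def FunAssign.supLift (V : FunAssign (Fin k → ℕ)) : FunAssign (Fin (k + 1) → ℕ) where
  U A' x' := if x' ∈ Set.range supCons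
    then supCons (V.U (supConsPreimage A') (Fin.tail x')) else x'
  maps A' x' hx' := by
    split_ifs with h
    · obtain ⟨x, rfl⟩ := h
      refine mem_supConsPreimage.mp (V.maps _ _ (mem_supConsPreimage.mpr ?_))
      rwa [tail_supCons]
    · exact hx'

namespace FunAssign

variable (V : FunAssign (Fin k → ℕ)) (A' : Finset (Fin (k + 1) → ℕ))

lemma supLift_U_supCons (x : Fin k → ℕ) :
    V.supLift.U A' (supCons x) = supCons (V.U (supConsPreimage A') x) := by
  simp [supLift, tail_supCons]

lemma supLift_U_of_notMem_range {x' : Fin (k + 1) → ℕ} (hx' : x' ∉ Set.range supCons) :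
    V.supLift.U A' x' = x' := by
  simp [supLift, hx']

lemma hasAtMostRegVals_of_supLift (hk : 0 < k) {E : Finset ℕ} {c : ℕ}
    (h : hasAtMostRegVals (V.supLift.U A') E c) :
    hasAtMostRegVals (V.U (supConsPreimage A')) E c := by
  have hmaps : Set.MapsTo supCons (regressiveValues (V.U (supConsPreimage A')) E)
      (regressiveValues (V.supLift.U A') E) := by
    rintro _ ⟨x, hxE, rfl, hx⟩
    refine ⟨supCons x, supCons_mem hk hxE, supLift_U_supCons V A' x, ?_⟩
    rwa [iSup_supCons hk, iInf_supCons hk]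
  exact ⟨h.1.of_injOn hmaps supCons_injective.injOn,
    (Set.ncard_le_ncard_of_injOn _ hmaps supCons_injective.injOn h.1).trans h.2⟩

end FunAssign

theorem SharpDecreasing.lexSharpDecreasing_supLift {V : FunAssign (Fin k → ℕ)}
    (hV : SharpDecreasing V) : LexSharpDecreasing V.supLift := by
  intro A' x'
  have hsame : (∀ y ∈ supConsPreimage A',
      V.U (supConsPreimage A') y = V.U (supConsPreimage (insert x' A')) y) →
      ∀ y' ∈ A', V.supLift.U A' y' = V.supLift.U (insert x' A') y' := by
    intro h y' hy'
    by_cases hy : y' ∈ Set.range supCons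
    · obtain ⟨y, rfl⟩ := hy
      rw [V.supLift_U_supCons, V.supLift_U_supCons, h y (mem_supConsPreimage.mpr hy')]
    · rw [V.supLift_U_of_notMem_range _ hy, V.supLift_U_of_notMem_range _ hy]
  by_cases hx' : x' ∈ Set.range supCons
  · obtain ⟨x, rfl⟩ := hx'
    rw [supConsPreimage_insert_supCons] at hsame
    rcases hV (supConsPreimage A') x with h | ⟨y, hyA, hxy, hUy⟩
    · exact Or.inl (hsame h)
    · refine Or.inr ⟨supCons y, mem_supConsPreimage.mp hyA, lexLt_of_lt_zero hxy, ?_⟩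
      rw [V.supLift_U_supCons, V.supLift_U_supCons, supConsPreimage_insert_supCons]
      exact lexLt_of_lt_zero hUy
  · rw [supConsPreimage_insert_of_notMem_range A' hx'] at hsame
    exact Or.inl (hsame fun _ _ => rfl)

end Regressive

/-- Lemma 3.13: Proposition A for lex #-decreasing implies Proposition A for
#-decreasing. -/
theorem stmt_11
    (hlex : ∀ k p : ℕ, 0 < k → 0 < p → ∀ V : FunAssign (Fin k → ℕ),
      LexSharpDecreasing V →
      ∃ (A : Finset (Fin k → ℕ)) (E : Finset ℕ), E.card = p ∧
        (∀ x : Fin k → ℕ, (∀ i, x i ∈ E) → x ∈ A) ∧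
        hasAtMostRegVals (V.U A) E (k ^ k)) :
    ∀ k p : ℕ, 0 < k → 0 < p → ∀ V : FunAssign (Fin k → ℕ),
      SharpDecreasing V →
      ∃ (A : Finset (Fin k → ℕ)) (E : Finset ℕ), E.card = p ∧
        (∀ x : Fin k → ℕ, (∀ i, x i ∈ E) → x ∈ A) ∧
        hasAtMostRegVals (V.U A) E (k ^ k) := by
  intro k p hk _ V hV
  obtain ⟨q, hq⟩ := exists_subset_hasAtMostRegVals_pow_self k ((k + 1) ^ (k + 1)) p
  obtain ⟨A', E', hE'card, hA', hA'reg⟩ :=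
    hlex (k + 1) (max q 1) k.succ_pos (by omega) V.supLift hV.lexSharpDecreasing_supLift
  obtain ⟨E, hEE', hEcard, hE⟩ :=
    hq _ E' (by omega) (V.hasAtMostRegVals_of_supLift A' hk hA'reg)
  refine ⟨supConsPreimage A', E, hEcard, fun x hx => ?_, hE⟩
  exact mem_supConsPreimage.mpr (hA' _ (supCons_mem hk fun i => hEE' (hx i)))
end
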